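/- Let n ≥ 2 be an integer, k an index in Fin n, and set γ = 2(n−1)·log(3/8) (a negative real), β = e^γ − 1, and α = (e^γ − 1)/γ. Let μ be the product over Fin n of the uniform probability measure on [−π, π]. Define the tilted gradient g_γ : (Fin n → ℝ) → ℝ by g_γ(θ) = α·(1/2)·sin(θ_k)·B(θ) / ( e^γ + (1 − e^γ)·cos²(θ_k/2)·B(θ) ), where B(θ) = ∏_{j ≠ k} cos²(θ_j/2). Then ∫ g_γ² dμ ≥ (25/512) · 1/( (log(3/8))² · (n−1)² ); in particular, under this linear negative tilt schedule the gradient variance is Ω(1/n²) rather than exponentially small in n. -/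

import Mathlib

/-!
Write `s = (3/8)^(n-1)`, so that `e^γ = s²`, and `B = ∏_{j ≠ k} cos²(θ_j/2)`. By Fubini we first
integrate over `θ_k` with `B` fixed: since `e^γ + (1 - e^γ) cos²(θ_k/2) B = a + b cos θ_k` with
`a² - b² = s² t²`, `t = √(s² + (1 - s²) B)`, the classical integral of `sin²/(a + b cos)²` gives
`α² (t - s)² / (2 s t (1 - s²)²)`, and this is at least `α² (1 - s)² B² / (2 s (1 - s²)²)`.
Since `B²` has mean `(3/8)^(n-1) = s`, the factor `1/s` cancels and the variance is at least
`(1 - s)² / (2 γ²) ≥ (5/8)² / (2 γ²)`, which is polynomial in `n`.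
-/

open MeasureTheory Finset Real

theorem add_mul_cos_pos {a b : ℝ} (hab : |b| < a) (x : ℝ) : 0 < a + b * cos x := by
  have : |b * cos x| ≤ |b| := by
    rw [abs_mul]; exact mul_le_of_le_one_right (abs_nonneg b) (abs_cos_le_one x)
  linarith [neg_abs_le (b * cos x)]

/-- Unlike the half-angle primitive `2 arctan (√((a - b)/(a + b)) tan (x/2))`, this primitive of
`R / (a + b cos x)` is smooth on all of `ℝ`. -/
theorem hasDerivAt_sub_two_mul_arctan {a b R : ℝ} (hR : 0 ≤ R) (hR2 : R ^ 2 = a ^ 2 - b ^ 2)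
    (hab : |b| < a) (x : ℝ) :
    HasDerivAt (fun x => x - 2 * arctan (b * sin x / (a + R + b * cos x)))
      (R / (a + b * cos x)) x := by
  have hD := add_mul_cos_pos hab x
  have hM : 0 < a + R + b * cos x := by linarith
  have hq := ((hasDerivAt_sin x).const_mul b).div
    (((hasDerivAt_cos x).const_mul b).const_add (a + R)) hM.ne'
  refine ((hasDerivAt_id x).sub (hq.arctan.const_mul 2)).congr_deriv ?_
  have hsc := sin_sq_add_cos_sq x
  simp only [Pi.div_apply]
  field_simp
  linear_combination (-(a + b * cos x + R)) * hR2 - b ^ 2 * (a + b * cos x + R) * hsc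

theorem hasDerivAt_primitive_sin_sq_div_sq {a b : ℝ} (hb : b ≠ 0) (hab : |b| < a) (x : ℝ) :
    HasDerivAt (fun x => sin x / (b * (a + b * cos x)) - x / b ^ 2
        + a / (b ^ 2 * √(a ^ 2 - b ^ 2)) *
          (x - 2 * arctan (b * sin x / (a + √(a ^ 2 - b ^ 2) + b * cos x))))
      (sin x ^ 2 / (a + b * cos x) ^ 2) x := by
  have hR2 : √(a ^ 2 - b ^ 2) ^ 2 = a ^ 2 - b ^ 2 :=
    sq_sqrt (by nlinarith [abs_nonneg b, sq_abs b])
  have hR : 0 < √(a ^ 2 - b ^ 2) := sqrt_pos.2 (by nlinarith [abs_nonneg b, sq_abs b])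
  have hD := add_mul_cos_pos hab x
  have hq := (hasDerivAt_sin x).div
    ((((hasDerivAt_cos x).const_mul b).const_add a).const_mul b) (mul_ne_zero hb hD.ne')
  refine ((hq.sub ((hasDerivAt_id x).div_const (b ^ 2))).add
    ((hasDerivAt_sub_two_mul_arctan hR.le hR2 hab x).const_mul _)).congr_deriv ?_
  have hD' : a + cos x * b ≠ 0 := by rw [mul_comm]; exact hD.ne'
  field_simp
  ring

theorem integral_sin_sq_div_sq_add_mul_cos {a b : ℝ} (hb : b ≠ 0) (hab : |b| < a) :
    ∫ x in -π..π, sin x ^ 2 / (a + b * cos x) ^ 2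
      = 2 * π * (a / √(a ^ 2 - b ^ 2) - 1) / b ^ 2 := by
  have hc : Continuous fun x => sin x ^ 2 / (a + b * cos x) ^ 2 :=
    .div (by fun_prop) (by fun_prop) fun x => pow_ne_zero 2 (add_mul_cos_pos hab x).ne'
  rw [intervalIntegral.integral_eq_sub_of_hasDerivAt
    (fun x _ => hasDerivAt_primitive_sin_sq_div_sq hb hab x) (hc.intervalIntegrable _ _)]
  simp only [sin_pi, sin_neg, cos_neg, neg_zero, mul_zero, zero_div, arctan_zero]
  field_simp
  ring

theorem integral_cos_half_pow_four : ∫ x in -π..π, cos (x / 2) ^ 4 = 3 * π / 4 := by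
  have h : ∀ x, cos (x / 2) ^ 4 = (1 + 2 * cos x + cos x ^ 2) / 4 := fun x => by
    rw [show cos (x / 2) ^ 4 = (cos (x / 2) ^ 2) ^ 2 by ring, cos_sq,
      mul_div_cancel₀ x two_ne_zero]
    ring
  simp_rw [h]
  rw [intervalIntegral.integral_div, intervalIntegral.integral_add, intervalIntegral.integral_add,
    intervalIntegral.integral_const_mul, integral_cos, integral_cos_sq]
  · simp only [intervalIntegral.integral_const, smul_eq_mul, sin_pi, sin_neg, cos_pi, cos_neg]
    ring
  all_goals exact Continuous.intervalIntegrable (by fun_prop) _ _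

theorem Fin.prod_univ_erase {M : Type*} [CommMonoid M] {N : ℕ} (k : Fin (N + 1))
    (f : Fin (N + 1) → M) : ∏ j ∈ univ.erase k, f j = ∏ j, f (k.succAbove j) := by
  rw [← compl_singleton, ← Fin.image_succAbove_univ,
    prod_image fun _ _ _ _ h => Fin.succAbove_right_injective h]

theorem integral_pi_eq_integral_integral_succAbove {X : Type*} [MeasurableSpace X]
    (μ : Measure X) [SigmaFinite μ] {N : ℕ} (k : Fin (N + 1)) (G : X × (Fin N → X) → ℝ)
    (hG : Integrable G (μ.prod (Measure.pi fun _ => μ))) :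
    ∫ θ, G (θ k, fun j => θ (k.succAbove j)) ∂Measure.pi (fun _ => μ)
      = ∫ y, ∫ x, G (x, y) ∂μ ∂Measure.pi fun _ => μ := by
  rw [← integral_prod_symm G hG,
    ← (measurePreserving_piFinSuccAbove (fun _ => μ) k).integral_comp']
  rfl

noncomputable def uniformIcc (a b : ℝ) : Measure ℝ :=
  ENNReal.ofReal (1 / (b - a)) • volume.restrict (Set.Icc a b)

theorem isProbabilityMeasure_uniformIcc {a b : ℝ} (hab : a < b) :
    IsProbabilityMeasure (uniformIcc a b) := by
  constructor
  rw [uniformIcc, Measure.smul_apply, Measure.restrict_apply_univ, volume_Icc, smul_eq_mul,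
    ← ENNReal.ofReal_mul (by simp [hab.le]), one_div_mul_cancel (sub_pos.2 hab).ne',
    ENNReal.ofReal_one]

theorem integral_uniformIcc {a b : ℝ} (hab : a ≤ b) (f : ℝ → ℝ) :
    ∫ x, f x ∂uniformIcc a b = (1 / (b - a)) * ∫ x in a..b, f x := by
  rw [uniformIcc, MeasureTheory.integral_smul_measure, ENNReal.toReal_ofReal (by simp [hab]),
    intervalIntegral.integral_of_le hab, integral_Icc_eq_integral_Ioc, smul_eq_mul]

/-- With `E = e^γ` and `B = ∏_{j ≠ k} cos²(θ_j/2)`, `tiltedGrad α E θ_k B` is the paper's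
`g_γ(θ)`. -/
noncomputable def tiltedGrad (α E x B : ℝ) : ℝ :=
  α * ((1 / 2) * sin x) * B / (E + (1 - E) * cos (x / 2) ^ 2 * B)

theorem le_tiltedGrad_denominator {E B : ℝ} (hE : E ≤ 1) (hB : 0 ≤ B) (x : ℝ) :
    E ≤ E + (1 - E) * cos (x / 2) ^ 2 * B := by
  have := mul_nonneg (mul_nonneg (sub_nonneg.2 hE) (sq_nonneg (cos (x / 2)))) hB
  linarith

theorem abs_tiltedGrad_le {α E B : ℝ} (hE0 : 0 < E) (hE1 : E ≤ 1) (hB0 : 0 ≤ B) (hB1 : B ≤ 1)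
    (x : ℝ) : |tiltedGrad α E x B| ≤ |α| / (2 * E) := by
  have hD := le_tiltedGrad_denominator hE1 hB0 x
  rw [tiltedGrad, abs_div, abs_of_pos (hE0.trans_le hD), abs_mul, abs_mul, abs_mul,
    abs_of_nonneg hB0, abs_of_pos (one_half_pos (α := ℝ))]
  calc |α| * (1 / 2 * |sin x|) * B / (E + (1 - E) * cos (x / 2) ^ 2 * B)
      ≤ |α| * (1 / 2 * 1) * 1 / E := by
        gcongr
        exact abs_sin_le_one x
    _ = |α| / (2 * E) := by ring

theorem integrable_tiltedGrad_sq {X : Type*} [TopologicalSpace X] [MeasurableSpace X]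
    [OpensMeasurableSpace X] {μ : Measure X} [IsFiniteMeasure μ] {α E : ℝ} (hE0 : 0 < E)
    (hE1 : E ≤ 1) {f g : X → ℝ} (hf : Continuous f) (hg : Continuous g) (hg0 : ∀ p, 0 ≤ g p)
    (hg1 : ∀ p, g p ≤ 1) : Integrable (fun p => tiltedGrad α E (f p) (g p) ^ 2) μ := by
  refine .of_bound (Continuous.aestronglyMeasurable ?_) ((|α| / (2 * E)) ^ 2)
    (.of_forall fun p => ?_)
  · refine .pow (.div (by fun_prop) (by fun_prop) fun p => ?_) 2
    exact (hE0.trans_le (le_tiltedGrad_denominator hE1 (hg0 p) (f p))).ne'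
  · rw [norm_pow, norm_eq_abs]
    exact pow_le_pow_left₀ (abs_nonneg _) (abs_tiltedGrad_le hE0 hE1 (hg0 p) (hg1 p) _) 2

theorem tiltedGrad_sq (α E x B : ℝ) :
    tiltedGrad α E x B ^ 2 = α ^ 2 * B ^ 2 / 4 *
      (sin x ^ 2 / (E + (1 - E) * B / 2 + (1 - E) * B / 2 * cos x) ^ 2) := by
  rw [tiltedGrad, cos_sq, mul_div_cancel₀ x two_ne_zero, div_pow]
  ring

theorem integral_tiltedGrad_sq {α s B : ℝ} (hs0 : 0 < s) (hs1 : s < 1) (hB : 0 < B) :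
    ∫ x in -π..π, tiltedGrad α (s ^ 2) x B ^ 2
      = π * α ^ 2 * (√(s ^ 2 + (1 - s ^ 2) * B) - s) ^ 2
        / (s * √(s ^ 2 + (1 - s ^ 2) * B) * (1 - s ^ 2) ^ 2) := by
  set t := √(s ^ 2 + (1 - s ^ 2) * B)
  have hs2 : 0 < 1 - s ^ 2 := by nlinarith
  have hb : 0 < (1 - s ^ 2) * B / 2 := by positivity
  have ht : 0 < t := sqrt_pos.2 (by positivity)
  have ht2 : t ^ 2 = s ^ 2 + (1 - s ^ 2) * B := sq_sqrt (by positivity)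
  have hR : √((s ^ 2 + (1 - s ^ 2) * B / 2) ^ 2 - ((1 - s ^ 2) * B / 2) ^ 2) = s * t := by
    rw [← sqrt_sq (by positivity : 0 ≤ s * t), mul_pow, ht2]
    ring_nf
  simp_rw [tiltedGrad_sq]
  rw [intervalIntegral.integral_const_mul, integral_sin_sq_div_sq_add_mul_cos hb.ne'
    (by rw [abs_of_pos hb]; nlinarith), hR]
  have hBt : B = (t ^ 2 - s ^ 2) / (1 - s ^ 2) := by rw [ht2]; field_simp; ring
  have hts : t ^ 2 - s ^ 2 ≠ 0 := by rw [ht2, add_sub_cancel_left]; positivity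
  rw [hBt]
  field_simp
  ring

theorem mul_sq_le_sq_sub {s t B : ℝ} (hs : 0 ≤ s) (ht : 0 ≤ t) (ht1 : t ≤ 1)
    (hB : (1 - s ^ 2) * B = t ^ 2 - s ^ 2) : t * ((1 - s) * B) ^ 2 ≤ (t - s) ^ 2 := by
  have hfac : ((1 - s) * B) * (1 + s) = (t - s) * (t + s) := by linear_combination hB
  have hmono : t * (t + s) ^ 2 ≤ (1 + s) ^ 2 := by
    calc t * (t + s) ^ 2 ≤ 1 * (1 + s) ^ 2 := by gcongr
      _ = (1 + s) ^ 2 := one_mul _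
  have h : (t * ((1 - s) * B) ^ 2) * (1 + s) ^ 2 ≤ (t - s) ^ 2 * (1 + s) ^ 2 := by
    calc (t * ((1 - s) * B) ^ 2) * (1 + s) ^ 2 = (t - s) ^ 2 * (t * (t + s) ^ 2) := by
          linear_combination t * ((1 - s) * B * (1 + s) + (t - s) * (t + s)) * hfac
      _ ≤ (t - s) ^ 2 * (1 + s) ^ 2 := by gcongr
  exact le_of_mul_le_mul_right h (by positivity)

theorem le_integral_uniformIcc_tiltedGrad_sq {α s B : ℝ} (hs0 : 0 < s) (hs1 : s < 1)
    (hB0 : 0 ≤ B) (hB1 : B ≤ 1) :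
    α ^ 2 * (1 - s) ^ 2 / (2 * s * (1 - s ^ 2) ^ 2) * B ^ 2
      ≤ ∫ x, tiltedGrad α (s ^ 2) x B ^ 2 ∂uniformIcc (-π) π := by
  rw [integral_uniformIcc (by linarith [pi_pos])]
  rcases hB0.eq_or_lt with rfl | hB
  · simp [tiltedGrad]
  rw [integral_tiltedGrad_sq hs0 hs1 hB]
  set t := √(s ^ 2 + (1 - s ^ 2) * B)
  have hs2 : 0 < 1 - s ^ 2 := by nlinarith
  have ht2 : t ^ 2 = s ^ 2 + (1 - s ^ 2) * B := sq_sqrt (by positivity)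
  have ht : 0 < t := sqrt_pos.2 (by positivity)
  have ht1 : t ≤ 1 := sqrt_le_one.2 (by nlinarith)
  have key := mul_sq_le_sq_sub (B := B) hs0.le ht.le ht1 (by rw [ht2]; ring)
  calc α ^ 2 * (1 - s) ^ 2 / (2 * s * (1 - s ^ 2) ^ 2) * B ^ 2
      = α ^ 2 / (2 * s * (1 - s ^ 2) ^ 2) * ((1 - s) * B) ^ 2 := by ring
    _ ≤ α ^ 2 / (2 * s * (1 - s ^ 2) ^ 2) * ((t - s) ^ 2 / t) := by
        gcongr
        rwa [le_div_iff₀ ht, mul_comm]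
    _ = 1 / (π - -π) * (π * α ^ 2 * (t - s) ^ 2 / (s * t * (1 - s ^ 2) ^ 2)) := by
        field_simp
        ring

theorem le_integral_pi_tiltedGrad_sq {N : ℕ} (k : Fin (N + 1)) {α s : ℝ} (hs0 : 0 < s)
    (hs1 : s < 1) :
    α ^ 2 * (1 - s) ^ 2 / (2 * s * (1 - s ^ 2) ^ 2) * (3 / 8) ^ N
      ≤ ∫ θ, tiltedGrad α (s ^ 2) (θ k) (∏ j ∈ univ.erase k, cos (θ j / 2) ^ 2) ^ 2
          ∂Measure.pi fun _ => uniformIcc (-π) π := by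
  have := isProbabilityMeasure_uniformIcc (neg_lt_self pi_pos)
  set μ := uniformIcc (-π) π
  set B : (Fin N → ℝ) → ℝ := fun y => ∏ j, cos (y j / 2) ^ 2
  have hB0 : ∀ y, 0 ≤ B y := fun y => prod_nonneg fun j _ => sq_nonneg _
  have hB1 : ∀ y, B y ≤ 1 := fun y => prod_le_one (fun j _ => sq_nonneg _)
    fun j _ => cos_sq_le_one _
  set G : ℝ × (Fin N → ℝ) → ℝ := fun p => tiltedGrad α (s ^ 2) p.1 (B p.2) ^ 2
  have hG : Integrable G (μ.prod (Measure.pi fun _ => μ)) :=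
    integrable_tiltedGrad_sq (by positivity) (by nlinarith) continuous_fst
      (by fun_prop : Continuous fun p : ℝ × (Fin N → ℝ) => B p.2) (fun p => hB0 p.2)
      fun p => hB1 p.2
  have hBsq : Integrable (fun y => B y ^ 2) (Measure.pi fun _ => μ) := by
    refine .of_bound (by fun_prop : Continuous fun y => B y ^ 2).aestronglyMeasurable 1
      (.of_forall fun y => ?_)
    rw [norm_pow, norm_of_nonneg (hB0 y)]
    exact pow_le_one₀ (hB0 y) (hB1 y)
  have hcos4 : ∫ x, cos (x / 2) ^ 4 ∂μ = 3 / 8 := by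
    rw [integral_uniformIcc (by linarith [pi_pos]), integral_cos_half_pow_four]
    field_simp
    ring
  simp_rw [Fin.prod_univ_erase k]
  calc α ^ 2 * (1 - s) ^ 2 / (2 * s * (1 - s ^ 2) ^ 2) * (3 / 8) ^ N
      = ∫ y, α ^ 2 * (1 - s) ^ 2 / (2 * s * (1 - s ^ 2) ^ 2) * B y ^ 2
          ∂Measure.pi fun _ => μ := by
        simp only [B, ← prod_pow, ← pow_mul, Nat.reduceMul]
        rw [MeasureTheory.integral_const_mul,
          integral_fintype_prod_eq_pow fun x => cos (x / 2) ^ 4, hcos4, Fintype.card_fin]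
    _ ≤ ∫ y, ∫ x, G (x, y) ∂μ ∂Measure.pi fun _ => μ :=
        integral_mono (hBsq.const_mul _) hG.integral_prod_right fun y =>
          le_integral_uniformIcc_tiltedGrad_sq hs0 hs1 (hB0 y) (hB1 y)
    _ = _ := (integral_pi_eq_integral_integral_succAbove μ k G hG).symm

/-- **Polynomial gradient-variance lower bound under a linear negative tilt schedule.** For
`n ≥ 2`, `γ = 2(n−1)·log(3/8)` and `α = (e^γ − 1)/γ`, the tilted gradient
`g_γ(θ) = α·(1/2)·sin(θ k)·B(θ) / (e^γ + (1 − e^γ)·cos²(θ k/2)·B(θ))` with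
`B(θ) = ∏_{j ≠ k} cos²(θ j / 2)` satisfies
`∫ g_γ² dμ ≥ (25/512)·1/((log(3/8))²·(n−1)²)` under the product of uniform measures on
`[−π, π]`; in particular the gradient variance is `Ω(1/n²)`. -/
theorem tilted_gradient_variance_lower_bound (n : ℕ) (hn : 2 ≤ n) (k : Fin n)
    (γ : ℝ) (hγdef : γ = 2 * ((n : ℝ) - 1) * Real.log (3 / 8))
    (α : ℝ) (hαdef : α = (Real.exp γ - 1) / γ) :
    (25 / 512) * (1 / ((Real.log (3 / 8)) ^ 2 * ((n : ℝ) - 1) ^ 2)) ≤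
      ∫ θ : Fin n → ℝ,
        (α * ((1 / 2) * Real.sin (θ k)) * (∏ j ∈ univ.erase k, Real.cos (θ j / 2) ^ 2) /
          (Real.exp γ + (1 - Real.exp γ) * Real.cos (θ k / 2) ^ 2 *
            ∏ j ∈ univ.erase k, Real.cos (θ j / 2) ^ 2)) ^ 2
        ∂(Measure.pi fun _ : Fin n =>
          (ENNReal.ofReal (1 / (2 * Real.pi))) •
            (volume.restrict (Set.Icc (-Real.pi) Real.pi))) := by
  obtain ⟨N, rfl⟩ : ∃ N, n = N + 1 := ⟨n - 1, by omega⟩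
  have hN : (1 : ℝ) ≤ N := by exact_mod_cast (by omega : 1 ≤ N)
  rw [show ((N + 1 : ℕ) : ℝ) - 1 = N by push_cast; ring] at hγdef ⊢
  set L := log (3 / 8)
  set s : ℝ := (3 / 8) ^ N
  have hL : L < 0 := log_neg (by norm_num) (by norm_num)
  have hγ : γ ≠ 0 := by rw [hγdef]; nlinarith
  have hs0 : 0 < s := by positivity
  have hs : s ≤ 3 / 8 := pow_le_of_le_one (by norm_num) (by norm_num) (by omega)
  have hexp : exp γ = s ^ 2 := by
    rw [hγdef, show 2 * (N : ℝ) * L = (2 * N : ℕ) * L by push_cast; ring, exp_nat_mul,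
      exp_log (by norm_num), pow_mul']
  have hμ : ENNReal.ofReal (1 / (2 * π)) • volume.restrict (Set.Icc (-π) π)
      = uniformIcc (-π) π := by
    rw [uniformIcc, sub_neg_eq_add, ← two_mul]
  rw [hμ, hexp]
  refine le_trans ?_ (le_integral_pi_tiltedGrad_sq k hs0 (by linarith))
  have hs2 : 1 - s ^ 2 ≠ 0 := by nlinarith
  calc 25 / 512 * (1 / (L ^ 2 * N ^ 2)) = (1 - 3 / 8) ^ 2 / (2 * γ ^ 2) := by
        rw [hγdef]; field_simp; ring
    _ ≤ (1 - s) ^ 2 / (2 * γ ^ 2) := by gcongr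
    _ = α ^ 2 * (1 - s) ^ 2 / (2 * s * (1 - s ^ 2) ^ 2) * s := by
        rw [hαdef, hexp]; field_simp; ring
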